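/- arXiv:0806.2497 — 2 statements merged into one kernel-verified Lean document; each statement's English description precedes it below -/
import Mathlib

section
/- Let R be a ring, A ⊆ R a finite non-empty set, and r ∈ R* a non-zero-divisor. Suppose x ∈ R satisfies |x·A + r·A| ≤ K·|A| for some K ≥ 1. Then there exist d, d' ∈ A − A with d ≠ 0 such that x·d = r·d', provided |A| > K (so that the count of such pairs, which is at least |A|/K, exceeds the number of degenerate ones). -/
open Pointwise Finset

/-! Since `|x • A + r • A| ≤ K |A| < |A|²`, two distinct pairs `(a, b) ≠ (a', b')` in `A × A` give
the same value `x a + r b = x a' + r b'`. Cancelling `r` shows `a ≠ a'`, so `d = a - a'` and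
`d' = b' - b` satisfy `x d = r d'`. -/

lemma Finset.exists_ne_pair_mul_add_mul_eq_of_card_lt {R : Type*} [Mul R] [Add R] [DecidableEq R]
    {x r : R} {A B : Finset R} (h : (x • A + r • B).card < A.card * B.card) :
    ∃ p ∈ A ×ˢ B, ∃ q ∈ A ×ˢ B, p ≠ q ∧ x * p.1 + r * p.2 = x * q.1 + r * q.2 := by
  rw [← card_product] at h
  refine exists_ne_map_eq_of_card_lt_of_maps_to h fun p hp => ?_
  rw [mem_coe, mem_product] at hp
  exact add_mem_add (smul_mem_smul_finset hp.1) (smul_mem_smul_finset hp.2)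

lemma Finset.exists_sub_mul_eq_mul_sub_of_card_lt {R : Type*} [NonUnitalRing R] [DecidableEq R]
    {x r : R} (hr : IsLeftRegular r) {A B : Finset R}
    (h : (x • A + r • B).card < A.card * B.card) :
    ∃ d ∈ A - A, ∃ d' ∈ B - B, d ≠ 0 ∧ x * d = r * d' := by
  obtain ⟨⟨a, b⟩, hp, ⟨a', b'⟩, hq, hne, heq⟩ := exists_ne_pair_mul_add_mul_eq_of_card_lt h
  rw [mem_product] at hp hq
  have ha : a ≠ a' := by
    rintro rfl
    exact hne (Prod.ext rfl (hr (add_left_cancel heq)))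
  refine ⟨a - a', sub_mem_sub hp.1 hq.1, b' - b, sub_mem_sub hq.2 hp.2, sub_ne_zero.mpr ha, ?_⟩
  rw [mul_sub, mul_sub, sub_eq_sub_iff_add_eq_add, heq, add_comm]

theorem exists_parallel_difference_general {R : Type*} [NonUnitalRing R] [DecidableEq R]
    (A : Finset R) (hA : A.Nonempty) (K : ℝ) (r x : R)
    (hr : ∀ a : R, a ≠ 0 → r * a ≠ 0 ∧ a * r ≠ 0)
    (hbig : K < (A.card : ℝ))
    (hx : ((x • A + r • A).card : ℝ) ≤ K * A.card) :
    ∃ d ∈ A - A, ∃ d' ∈ A - A, d ≠ 0 ∧ x * d = r * d' := by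
  have hr_reg : IsLeftRegular r :=
    isLeftRegular_of_non_zero_divisor r fun a hra => by_contra fun ha => (hr a ha).1 hra
  have hA_pos : (0 : ℝ) < A.card := by exact_mod_cast hA.card_pos
  have hcard : (x • A + r • A).card < A.card * A.card := by
    have : K * A.card < A.card * A.card := mul_lt_mul_of_pos_right hbig hA_pos
    exact_mod_cast hx.trans_lt this
  exact exists_sub_mul_eq_mul_sub_of_card_lt hr_reg hcard

/-- If `r` is a non-zero-divisor, `|x·A + r·A| ≤ K|A|` and `|A| > K`, then there exist
`d, d' ∈ A - A` with `d ≠ 0` and `x·d = r·d'`. -/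
theorem exists_parallel_difference {R : Type*} [NonUnitalRing R] [DecidableEq R]
    (A : Finset R) (hA : A.Nonempty) (K : ℝ) (hK : 1 ≤ K) (r x : R)
    (hr : ∀ a : R, a ≠ 0 → r * a ≠ 0 ∧ a * r ≠ 0)
    (hbig : K < (A.card : ℝ))
    (hx : ((x • A + r • A).card : ℝ) ≤ K * A.card) :
    ∃ d ∈ A - A, ∃ d' ∈ A - A, d ≠ 0 ∧ x * d = r * d' :=
  exists_parallel_difference_general A hA K r x hr hbig hx
end

section
/- Let R be a ring and A ⊆ R finite non-empty with |A·A − A·A| ≤ K|A| and |A·A| ≥ |A|/K for some K ≥ 1, and suppose A − A contains a non-zero-divisor d. Then A·A ⊆ d·A − d·A + X for some finite set X ⊆ R with |X| ≤ K^C for an absolute constant C > 0. -/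
open Pointwise Finset

/-- If `|A·A - A·A| ≤ K|A|`, `|A·A| ≥ |A|/K` and `d ∈ A - A` is a non-zero-divisor,
then `A·A ⊆ d·A - d·A + X` for some `X` with `|X| ≤ K^C`, `C` an absolute constant. -/
theorem product_set_covering :
    ∃ C : ℝ, 0 < C ∧ ∀ (R : Type) (_ : NonUnitalRing R) (_ : DecidableEq R)
      (A : Finset R) (K : ℝ) (d : R), 1 ≤ K → A.Nonempty →
      ((A * A - A * A).card : ℝ) ≤ K * A.card →
      (A.card : ℝ) / K ≤ ((A * A).card : ℝ) →
      d ∈ A - A → (∀ a : R, a ≠ 0 → d * a ≠ 0 ∧ a * d ≠ 0) →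
      ∃ X : Finset R, (X.card : ℝ) ≤ K ^ C ∧ A * A ⊆ d • A - d • A + X := by
  refine ⟨7, by norm_num, ?_⟩
  intro R _ _ A K d hK hA hsub hprod hd hnzd
  set B : Finset R := A * A with hB
  have hK0 : (0 : ℝ) < K := lt_of_lt_of_le one_pos hK
  have hA0 : (0 : ℝ) < A.card := by exact_mod_cast card_pos.mpr hA
  have hBne : B.Nonempty := hA.mul hA
  have hB0 : (0 : ℝ) < B.card := by exact_mod_cast card_pos.mpr hBne
  -- d • A ⊆ B - B
  have hdA : d • A ⊆ B - B := by
    obtain ⟨a, ha, b, hb, hab⟩ := mem_sub.mp hd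
    intro x hx
    obtain ⟨y, hy, rfl⟩ := mem_smul_finset.mp hx
    have : d • y = a * y - b * y := by
      rw [smul_eq_mul, ← hab, sub_mul]
    rw [this]
    exact sub_mem_sub (mul_mem_mul ha hy) (mul_mem_mul hb hy)
  -- |d • A| = |A|
  have hcard_dA : (d • A).card = A.card := by
    rw [smul_finset_def]
    apply card_image_of_injective
    intro x y hxy
    simp only [smul_eq_mul] at hxy
    by_contra hne
    exact (hnzd (x - y) (sub_ne_zero.mpr hne)).1 (by rw [mul_sub, hxy, sub_self])
  -- B + d • A ⊆ (B + B) - B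
  have hsubset : B + d • A ⊆ (B + B) - B := by
    intro z hz
    obtain ⟨x, hx, y, hy, rfl⟩ := mem_add.mp hz
    obtain ⟨u, hu, v, hv, huv⟩ := mem_sub.mp (hdA hy)
    have : x + y = (x + u) - v := by rw [← huv, add_sub_assoc]
    rw [this]
    exact sub_mem_sub (add_mem_add hx hu) hv
  -- |B| ≤ |B - B|
  have hBle : (B.card : ℝ) ≤ ((B - B).card : ℝ) := by
    obtain ⟨b₀, hb₀⟩ := hBne
    have : B.card ≤ (B - B).card := by
      apply card_le_card_of_injOn (fun x => x - b₀)
      · exact fun x hx => sub_mem_sub hx hb₀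
      · intro x _ y _ h; simpa using h
    exact_mod_cast this
  -- Plünnecke-Ruzsa: |B + B - B| ≤ (|B-B|/|B|)^3 |B|
  have hPR := Finset.pluennecke_ruzsa_inequality_nsmul_sub_nsmul_sub hBne B 2 1
  have hPR' : (((B + B) - B).card : ℝ) ≤ (((B - B).card : ℝ) / (B.card : ℝ)) ^ 3 * (B.card : ℝ) := by
    rw [two_nsmul, one_nsmul] at hPR
    have := (NNRat.cast_le (K := ℝ)).mpr hPR
    push_cast at this
    convert this using 2
  -- ratio bound
  have hratio : ((B - B).card : ℝ) / (B.card : ℝ) ≤ K ^ 2 := by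
    rw [div_le_iff₀ hB0]
    calc ((B - B).card : ℝ) ≤ K * A.card := hsub
      _ = K ^ 2 * (A.card / K) := by field_simp
      _ ≤ K ^ 2 * B.card := by
          apply mul_le_mul_of_nonneg_left hprod (by positivity)
  -- |B - B| ≤ K |A| hence |B| ≤ K |A|
  have hBK : (B.card : ℝ) ≤ K * A.card := le_trans hBle hsub
  -- main card bound
  have hmain : ((B + d • A).card : ℝ) ≤ K ^ 7 * ((d • A).card : ℝ) := by
    rw [hcard_dA]
    calc ((B + d • A).card : ℝ) ≤ (((B + B) - B).card : ℝ) := by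
          exact_mod_cast card_le_card hsubset
      _ ≤ (((B - B).card : ℝ) / (B.card : ℝ)) ^ 3 * (B.card : ℝ) := hPR'
      _ ≤ (K ^ 2) ^ 3 * (K * A.card) := by
          apply mul_le_mul _ hBK hB0.le (by positivity)
          exact pow_le_pow_left₀ (by positivity) hratio 3
      _ = K ^ 7 * A.card := by ring
  -- Ruzsa covering
  have hdAne : (d • A).Nonempty := hA.smul_finset
  obtain ⟨F, hFB, hFcard, hcov⟩ := Finset.ruzsa_covering_add hdAne hmain
  refine ⟨F, ?_, ?_⟩
  · calc (F.card : ℝ) ≤ K ^ 7 := hFcard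
      _ = K ^ (7 : ℝ) := by
          rw [show (7 : ℝ) = ((7 : ℕ) : ℝ) by norm_num, Real.rpow_natCast]
  · intro z hz
    have := hcov hz
    rwa [add_comm] at this
end
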